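/- Let G be a group, g ∈ G, h ∈ G_α, and k > l ≥ 1 with α ≤ k − l. Suppose a ∈ G_l/G_{l+α} and b ∈ G_{l+α−1}/G_{l+α}. Then in G/G_{l+α} one has [ga, hb] = [g, h], where [x,y] = x⁻¹y⁻¹xy. -/

import Mathlib

/-!
Write `Q = G ⧸ G_{l+α}`. Everything rests on `[G_i, G_j] ≤ G_{i+j}`, proved by induction on `j`
from the three subgroups lemma. It makes `b` central in `Q` (as `[G, G_{l+α-1}] ≤ G_{l+α}`), and
makes `a` commute in `Q` with `h` and with `[g, h] ∈ G_{1+α}`. Hence in `Q`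
`[ga, hb] = [ga, h] = a⁻¹ [g, h] a = [g, h]`.
-/

/-- `lcs G k` is the `k`-th term `G_k` of the lower central series, 1-indexed:
`G_1 = G`, `G_{k+1} = [G, G_k]`. -/
def lcs (G : Type*) [Group G] (k : ℕ) : Subgroup G := Subgroup.lowerCentralSeries (⊤ : Subgroup G) (k - 1)

instance lcs_normal (G : Type*) [Group G] (k : ℕ) : (lcs G k).Normal :=
  Subgroup.lowerCentralSeries_normal ⊤ (k - 1)

lemma lcs_antitone {G : Type*} [Group G] {k l : ℕ} (h : k ≤ l) : lcs G l ≤ lcs G k :=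
  by unfold lcs; apply Subgroup.lowerCentralSeries_antitone; exact Nat.sub_le_sub_right h 1

/-- The natural projection `G/G_l → G/G_k` for `k ≤ l`. -/
def lcsProj (G : Type*) [Group G] (l k : ℕ) (h : k ≤ l) :
    G ⧸ lcs G l →* G ⧸ lcs G k :=
  QuotientGroup.map _ _ (MonoidHom.id G) (fun _ hx => lcs_antitone h hx)
/-- The commutator used in the paper: `[x,y] = x⁻¹y⁻¹xy`. -/
def pcomm {G : Type*} [Group G] (x y : G) : G := x⁻¹ * y⁻¹ * x * y

open Subgroup
open scoped commutatorElement

namespace Subgroup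

variable {G : Type*} [Group G]

theorem commutator_commutator_le_of_rotate {H₁ H₂ H₃ N : Subgroup G} [N.Normal]
    (h1 : ⁅⁅H₂, H₃⁆, H₁⁆ ≤ N) (h2 : ⁅⁅H₃, H₁⁆, H₂⁆ ≤ N) : ⁅⁅H₁, H₂⁆, H₃⁆ ≤ N := by
  -- In `G ⧸ N` the hypotheses say that the commutators vanish.
  have le_iff_map_eq_bot : ∀ A B C : Subgroup G, ⁅⁅A, B⁆, C⁆ ≤ N ↔
      ⁅⁅A.map (QuotientGroup.mk' N), B.map (QuotientGroup.mk' N)⁆,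
        C.map (QuotientGroup.mk' N)⁆ = ⊥ := fun A B C => by
    rw [← map_commutator, ← map_commutator, map_eq_bot_iff, QuotientGroup.ker_mk']
  rw [le_iff_map_eq_bot] at h1 h2 ⊢
  exact commutator_commutator_eq_bot_of_rotate h1 h2

theorem commutator_lowerCentralSeries_le (m n : ℕ) :
    ⁅lowerCentralSeries (⊤ : Subgroup G) m, lowerCentralSeries (⊤ : Subgroup G) n⁆ ≤
      lowerCentralSeries (⊤ : Subgroup G) (m + n + 1) := by
  induction n generalizing m with
  | zero => exact le_rfl
  | succ n ih =>
    rw [lowerCentralSeries_succ]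
    refine (commutator_comm_le _ _).trans (commutator_commutator_le_of_rotate ?_ ?_)
    · calc ⁅⁅⊤, lowerCentralSeries ⊤ m⁆, lowerCentralSeries ⊤ n⁆
          ≤ ⁅lowerCentralSeries ⊤ (m + 1), lowerCentralSeries ⊤ n⁆ :=
            commutator_mono (commutator_comm_le _ _) le_rfl
        _ ≤ lowerCentralSeries ⊤ (m + (n + 1) + 1) := by
            convert ih (m + 1) using 2; omega
    · exact commutator_mono (ih m) le_rfl

end Subgroup

section pcomm

variable {G : Type*} [Group G]

theorem lcs_commutator_le (i j : ℕ) :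
    ⁅lcs G i, lcs G j⁆ ≤ lcs G (i + j) :=
  (commutator_lowerCentralSeries_le (i - 1) (j - 1)).trans
    (Subgroup.lowerCentralSeries_antitone _ (by omega))

theorem mem_lcs_one (x : G) : x ∈ lcs G 1 :=
  mem_top x

theorem pcomm_eq_commutatorElement (x y : G) :
    pcomm x y = ⁅x⁻¹, y⁻¹⁆ := by
  simp [pcomm, commutatorElement_def]

theorem pcomm_mem_lcs {x y : G} {i j : ℕ}
    (hx : x ∈ lcs G i) (hy : y ∈ lcs G j) : pcomm x y ∈ lcs G (i + j) := by
  rw [pcomm_eq_commutatorElement]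
  exact lcs_commutator_le i j (commutator_mem_commutator (inv_mem hx) (inv_mem hy))

theorem pcomm_eq_one_iff {x y : G} : pcomm x y = 1 ↔ Commute x y := by
  rw [pcomm_eq_commutatorElement, commutatorElement_eq_one_iff_commute, Commute.inv_inv_iff]

theorem QuotientGroup.mk_pcomm (N : Subgroup G) [N.Normal] (x y : G) :
    ((pcomm x y : G) : G ⧸ N) = pcomm (x : G ⧸ N) y := by
  simp [pcomm]

theorem QuotientGroup.commute_mk_of_pcomm_mem {N : Subgroup G} [N.Normal] {x y : G}
    (hxy : pcomm x y ∈ N) : Commute (x : G ⧸ N) y := by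
  rwa [← QuotientGroup.eq_one_iff, QuotientGroup.mk_pcomm, pcomm_eq_one_iff] at hxy

theorem pcomm_mul_right_of_commute {x y b : G} (hx : Commute x b) (hy : Commute y b) :
    pcomm x (y * b) = pcomm x y := by
  have hb : Commute b (pcomm x y) :=
    ((hx.inv_left.symm.mul_right hy.inv_left.symm).mul_right hx.symm).mul_right hy.symm
  calc pcomm x (y * b) = b⁻¹ * pcomm x y * b := by
        simp only [pcomm, mul_inv_rev, ← mul_assoc, hx.inv_inv.eq]
    _ = pcomm x y := by rw [hb.inv_left.eq, inv_mul_cancel_right]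

theorem pcomm_mul_left_of_commute {x y a : G} (hy : Commute a y) (hxy : Commute a (pcomm x y)) :
    pcomm (x * a) y = pcomm x y := by
  calc pcomm (x * a) y = a⁻¹ * pcomm x y * a := by
        simp only [pcomm, mul_inv_rev, mul_assoc, hy.eq]
    _ = pcomm x y := by rw [hxy.inv_left.eq, inv_mul_cancel_right]

end pcomm

theorem stmt12_general (G : Type*) [Group G] (g h a b : G) (l α : ℕ)
    (hh : h ∈ lcs G α) (ha : a ∈ lcs G l) (hb : b ∈ lcs G (l + α - 1)) :
    (QuotientGroup.mk (pcomm (g * a) (h * b)) : G ⧸ lcs G (l + α)) =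
      QuotientGroup.mk (pcomm g h) := by
  have hb_central : ∀ x : G ⧸ lcs G (l + α), Commute x b :=
    QuotientGroup.mk_surjective.forall.2 fun x => QuotientGroup.commute_mk_of_pcomm_mem
      (lcs_antitone (by omega) (pcomm_mem_lcs (mem_lcs_one x) hb))
  have hah : Commute (a : G ⧸ lcs G (l + α)) h :=
    QuotientGroup.commute_mk_of_pcomm_mem (pcomm_mem_lcs ha hh)
  have ha_pcomm : Commute (a : G ⧸ lcs G (l + α)) (pcomm (g : G ⧸ lcs G (l + α)) h) := by
    rw [← QuotientGroup.mk_pcomm]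
    exact (QuotientGroup.commute_mk_of_pcomm_mem (lcs_antitone (by omega)
      (pcomm_mem_lcs (pcomm_mem_lcs (mem_lcs_one g) hh) ha))).symm
  simp only [QuotientGroup.mk_pcomm, QuotientGroup.mk_mul]
  rw [pcomm_mul_right_of_commute (hb_central _) (hb_central _),
    pcomm_mul_left_of_commute hah ha_pcomm]

/-- Key commutator computation: for `g ∈ G`, `h ∈ G_α`, `a ∈ G_l`, `b ∈ G_{l+α-1}`,
one has `[ga, hb] = [g, h]` in `G/G_{l+α}` (with `k > l ≥ 1`, `α ≤ k - l`). -/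
theorem stmt12 (G : Type*) [Group G] (g h a b : G) (k l α : ℕ)
    (hkl : l < k) (hl : 1 ≤ l) (hα : α ≤ k - l)
    (hh : h ∈ lcs G α) (ha : a ∈ lcs G l) (hb : b ∈ lcs G (l + α - 1)) :
    (QuotientGroup.mk (pcomm (g * a) (h * b)) : G ⧸ lcs G (l + α)) =
      QuotientGroup.mk (pcomm g h) :=
  stmt12_general G g h a b l α hh ha hb
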